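/- Spectral-norm residual bound for low-rank matrix perturbation. Let X, Z ∈ ℝ^{m×n}, Y = X + Z, and suppose rank(X) ≤ r. Let Û ∈ ℝ^{m×r} satisfy ÛᵀÛ = I_r, let Û_⊥ ∈ ℝ^{m×(m−r)} satisfy Û_⊥ᵀÛ_⊥ = I_{m−r} and ÛᵀÛ_⊥ = 0, and assume ‖Û_⊥ᵀ Y‖ ≤ ‖Y − B‖ for every matrix B ∈ ℝ^{m×n} with rank(B) ≤ r (this holds in particular when the columns of Û are leading r left singular vectors of Y, since then ‖Û_⊥ᵀY‖ equals the (r+1)-st singular value of Y). Then ‖Û_⊥ᵀ X‖ ≤ 2‖Z‖ and ‖Û_⊥ᵀ X‖_F ≤ 2√r · ‖Z‖. -/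

import Mathlib

open Matrix BigOperators

noncomputable section

/-- Euclidean norm of a vector. -/
def vnorm {ι : Type*} [Fintype ι] (v : ι → ℝ) : ℝ := Real.sqrt (∑ i, v i ^ 2)

/-- Spectral norm (ℓ₂→ℓ₂ operator norm) of a matrix. -/
def specNorm {ι κ : Type*} [Fintype ι] [Fintype κ] (A : Matrix ι κ ℝ) : ℝ :=
  sSup {x | ∃ v : κ → ℝ, vnorm v ≤ 1 ∧ x = vnorm (A.mulVec v)}

/-- Squared Frobenius norm of a matrix. -/
def mfrobSq {ι κ : Type*} [Fintype ι] [Fintype κ] (A : Matrix ι κ ℝ) : ℝ :=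
  ∑ i, ∑ j, A i j ^ 2

/-- Frobenius norm of a matrix. -/
def mfrob {ι κ : Type*} [Fintype ι] [Fintype κ] (A : Matrix ι κ ℝ) : ℝ :=
  Real.sqrt (mfrobSq A)

/-!
Taking `B = X` in the optimality hypothesis gives `‖Û_⊥ᵀ Y‖ ≤ ‖Y - X‖ = ‖Z‖`, and `Û_⊥ᵀ` has
orthonormal rows, so `‖Û_⊥ᵀ X‖ ≤ ‖Û_⊥ᵀ Y‖ + ‖Û_⊥ᵀ Z‖ ≤ 2‖Z‖`. For the Frobenius bound, `Û_⊥ᵀ X`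
has rank at most `r`, and any matrix `A` of rank `k` satisfies `‖A‖_F² = tr (Aᴴ A) ≤ k ‖A‖²`:
`Aᴴ A` has exactly `k` nonzero eigenvalues, each at most `‖Aᴴ A‖ = ‖A‖²`.
-/

open scoped Matrix.Norms.L2Operator

namespace Matrix

variable {𝕜 ι κ μ : Type*} [RCLike 𝕜] [Fintype ι] [Fintype κ] [Fintype μ]

lemma l2_opNorm_one_le [DecidableEq κ] : ‖(1 : Matrix κ κ 𝕜)‖ ≤ 1 := by
  rw [l2_opNorm_def]
  simp only [LinearEquiv.trans_apply, toLpLin_one]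
  exact ContinuousLinearMap.norm_id_le

lemma l2_opNorm_le_one_of_conjTranspose_mul_self_eq_one [DecidableEq κ] {U : Matrix ι κ 𝕜}
    (hU : Uᴴ * U = 1) : ‖U‖ ≤ 1 := by
  have h := l2_opNorm_conjTranspose_mul_self U
  rw [hU] at h
  nlinarith [norm_nonneg U, l2_opNorm_one_le (𝕜 := 𝕜) (κ := κ)]

lemma l2_opNorm_conjTranspose_mul_le [DecidableEq ι] [DecidableEq κ] [DecidableEq μ]
    {U : Matrix ι κ 𝕜} (hU : Uᴴ * U = 1) (M : Matrix ι μ 𝕜) : ‖Uᴴ * M‖ ≤ ‖M‖ :=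
  calc ‖Uᴴ * M‖ ≤ ‖Uᴴ‖ * ‖M‖ := l2_opNorm_mul _ _
    _ = ‖U‖ * ‖M‖ := by rw [l2_opNorm_conjTranspose]
    _ ≤ ‖M‖ :=
      mul_le_of_le_one_left (norm_nonneg M) (l2_opNorm_le_one_of_conjTranspose_mul_self_eq_one hU)

lemma IsHermitian.abs_eigenvalues_le_l2_opNorm [DecidableEq κ] {A : Matrix κ κ 𝕜}
    (hA : A.IsHermitian) (i : κ) : |hA.eigenvalues i| ≤ ‖A‖ := by
  have hv : ‖hA.eigenvectorBasis i‖ = 1 := hA.eigenvectorBasis.orthonormal.1 i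
  have h := A.l2_opNorm_mulVec (hA.eigenvectorBasis i)
  rw [hv, mul_one] at h
  simpa [hA.mulVec_eigenvectorBasis, norm_smul, hv] using h

end Matrix

open Matrix

section

variable {ι κ : Type*} [Fintype ι] [Fintype κ]

lemma vnorm_eq_norm_toLp (v : ι → ℝ) : vnorm v = ‖WithLp.toLp 2 v‖ := by
  simp [vnorm, EuclideanSpace.norm_eq]

lemma specNorm_eq_l2_opNorm [DecidableEq κ] (A : Matrix ι κ ℝ) : specNorm A = ‖A‖ := by
  have hset : {x | ∃ v : κ → ℝ, vnorm v ≤ 1 ∧ x = vnorm (A *ᵥ v)} =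
      (fun x => ‖(toEuclideanLin.trans LinearMap.toContinuousLinearMap A) x‖) ''
        Metric.closedBall 0 1 := by
    ext x
    constructor
    · rintro ⟨v, hv, rfl⟩
      exact ⟨WithLp.toLp 2 v, by simpa [vnorm_eq_norm_toLp] using hv,
        by simp [vnorm_eq_norm_toLp]⟩
    · rintro ⟨w, hw, rfl⟩
      exact ⟨w.ofLp, by simpa [vnorm_eq_norm_toLp] using hw, by rw [vnorm_eq_norm_toLp]; rfl⟩
  rw [specNorm, hset, ContinuousLinearMap.sSup_unitClosedBall_eq_norm]
  rfl

lemma mfrobSq_eq_trace (A : Matrix ι κ ℝ) : mfrobSq A = (Aᴴ * A).trace := by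
  simp only [mfrobSq, trace, diag, mul_apply, conjTranspose_apply, star_trivial, sq]
  exact Finset.sum_comm

lemma mfrobSq_le_rank_mul_sq [DecidableEq κ] (A : Matrix ι κ ℝ) :
    mfrobSq A ≤ A.rank * ‖A‖ ^ 2 := by
  have hG := isHermitian_conjTranspose_mul_self A
  set nonzero := Finset.univ.filter fun i => hG.eigenvalues i ≠ 0
  have hrank : A.rank = nonzero.card := by
    rw [← rank_conjTranspose_mul_self, hG.rank_eq_card_non_zero_eigs, Fintype.card_subtype]
  have heig : ∀ i, hG.eigenvalues i ≤ ‖A‖ ^ 2 := fun i => by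
    rw [sq, ← l2_opNorm_conjTranspose_mul_self]
    exact (le_abs_self _).trans (hG.abs_eigenvalues_le_l2_opNorm i)
  calc mfrobSq A = ∑ i, hG.eigenvalues i := by
        simpa using (mfrobSq_eq_trace A).trans hG.trace_eq_sum_eigenvalues
    _ = ∑ i ∈ nonzero, hG.eigenvalues i := (Finset.sum_filter_ne_zero _).symm
    _ ≤ nonzero.card • ‖A‖ ^ 2 := Finset.sum_le_card_nsmul _ _ _ fun i _ => heig i
    _ = A.rank * ‖A‖ ^ 2 := by rw [hrank, nsmul_eq_mul]

lemma mfrob_le_sqrt_mul_l2_opNorm_of_rank_le [DecidableEq κ] {A : Matrix ι κ ℝ} {r : ℕ}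
    (h : A.rank ≤ r) : mfrob A ≤ √r * ‖A‖ := by
  rw [mfrob, ← Real.sqrt_sq (norm_nonneg A), ← Real.sqrt_mul (Nat.cast_nonneg r)]
  gcongr
  exact (mfrobSq_le_rank_mul_sq A).trans (by gcongr)

end

theorem low_rank_perturbation_residual_spectral_general
    (m n r : ℕ) (X Z : Matrix (Fin m) (Fin n) ℝ) (hrank : X.rank ≤ r)
    (Uhatperp : Matrix (Fin m) (Fin (m - r)) ℝ)
    (hUhatperp : Uhatperpᵀ * Uhatperp = 1)
    (hlead : ∀ B : Matrix (Fin m) (Fin n) ℝ, B.rank ≤ r →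
      specNorm (Uhatperpᵀ * (X + Z)) ≤ specNorm (X + Z - B)) :
    specNorm (Uhatperpᵀ * X) ≤ 2 * specNorm Z ∧
    mfrob (Uhatperpᵀ * X) ≤ 2 * Real.sqrt r * specNorm Z := by
  simp only [specNorm_eq_l2_opNorm, ← conjTranspose_eq_transpose_of_trivial] at hlead hUhatperp ⊢
  have hspec : ‖Uhatperpᴴ * X‖ ≤ 2 * ‖Z‖ :=
    calc ‖Uhatperpᴴ * X‖ = ‖Uhatperpᴴ * (X + Z) - Uhatperpᴴ * Z‖ := by
          rw [← Matrix.mul_sub, add_sub_cancel_right]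
      _ ≤ ‖Uhatperpᴴ * (X + Z)‖ + ‖Uhatperpᴴ * Z‖ := norm_sub_le _ _
      _ ≤ ‖Z‖ + ‖Z‖ := by
          gcongr
          · simpa using hlead X hrank
          · exact l2_opNorm_conjTranspose_mul_le hUhatperp Z
      _ = 2 * ‖Z‖ := by ring
  refine ⟨hspec, ?_⟩
  calc mfrob (Uhatperpᴴ * X) ≤ √r * ‖Uhatperpᴴ * X‖ :=
        mfrob_le_sqrt_mul_l2_opNorm_of_rank_le ((rank_mul_le_right _ _).trans hrank)
    _ ≤ √r * (2 * ‖Z‖) := by gcongr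
    _ = 2 * √r * ‖Z‖ := by ring

/-- Spectral-norm residual bound for low-rank matrix perturbation
(first part of Lemma 6 of Zhang–Han, 2018):
`‖Û_⊥ᵀ X‖ ≤ 2‖Z‖` and `‖Û_⊥ᵀ X‖_F ≤ 2√r ‖Z‖`. -/
theorem low_rank_perturbation_residual_spectral
    (m n r : ℕ) (X Z : Matrix (Fin m) (Fin n) ℝ) (hrank : X.rank ≤ r)
    (Uhat : Matrix (Fin m) (Fin r) ℝ) (Uhatperp : Matrix (Fin m) (Fin (m - r)) ℝ)
    (hUhat : Uhatᵀ * Uhat = 1) (hUhatperp : Uhatperpᵀ * Uhatperp = 1)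
    (hUhato : Uhatᵀ * Uhatperp = 0)
    (hlead : ∀ B : Matrix (Fin m) (Fin n) ℝ, B.rank ≤ r →
      specNorm (Uhatperpᵀ * (X + Z)) ≤ specNorm (X + Z - B)) :
    specNorm (Uhatperpᵀ * X) ≤ 2 * specNorm Z ∧
    mfrob (Uhatperpᵀ * X) ≤ 2 * Real.sqrt r * specNorm Z :=
  low_rank_perturbation_residual_spectral_general m n r X Z hrank Uhatperp hUhatperp hlead

end
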